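/- arXiv:2604.16212 — 4 statements merged into one kernel-verified Lean document; each statement's English description precedes it below -/
import Mathlib

section
/- Let P be symmetric positive definite. The quadratic dissipation inequality x^T(Ā^T P + P Ā)x + 2 x^T P B̄ u ≤ u^T C(Āx + B̄u) − x^T C^T Σ C(Āx + B̄u) holds for all x ∈ ℝ^n and u ∈ ℝ^m if and only if the matrix M̄₁ − (1/2)(M̄₂ + M̄₂^T) is negative semidefinite. (This is the continuous-time LMI characterization of output differential passivity ODP(Σ) with quadratic storage function S(x) = x^T P x, since along trajectories of ẋ = Āx + B̄u, y = Cx one has Ṡ = x^T(Ā^T P + P Ā)x + 2x^T P B̄ u and u^T ẏ − y^T Σ ẏ equals the right-hand side.) -/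
/-!
Both sides are the same quadratic form in `z = (x, u)`. The quadratic form of `M̄₁` is the storage
rate `Ṡ` as soon as `P` is symmetric, and that of `M̄₂` is the supply rate, because `M̄₂` is the
product of the column `[-Cᵀ Σ C; C]` with the row `[Ā B̄]`. Symmetrising `M̄₂` does not change its
quadratic form, so the LMI is exactly the dissipation inequality read on `ℝⁿ ⊕ ℝᵐ`.
-/

open Matrix

namespace Matrix

variable {ι κ R : Type*} [Fintype ι] [Fintype κ]

theorem dotProduct_half_smul_add_transpose_mulVec [Field R] [NeZero (2 : R)]
    (M : Matrix ι ι R) (z : ι → R) :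
    z ⬝ᵥ ((1 / 2 : R) • (M + Mᵀ)) *ᵥ z = z ⬝ᵥ M *ᵥ z := by
  rw [smul_mulVec, add_mulVec, dotProduct_smul, dotProduct_add, dotProduct_transpose_mulVec,
    smul_eq_mul, ← two_mul, ← mul_assoc, one_div, inv_mul_cancel₀ two_ne_zero, one_mul]

theorem sumElim_dotProduct_fromBlocks_mulVec_sumElim [NonUnitalNonAssocSemiring R]
    (A : Matrix ι ι R) (B : Matrix ι κ R) (D : Matrix κ ι R) (E : Matrix κ κ R)
    (x : ι → R) (u : κ → R) :
    Sum.elim x u ⬝ᵥ fromBlocks A B D E *ᵥ Sum.elim x u =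
      x ⬝ᵥ A *ᵥ x + x ⬝ᵥ B *ᵥ u + (u ⬝ᵥ D *ᵥ x + u ⬝ᵥ E *ᵥ u) := by
  rw [fromBlocks_mulVec, sumElim_dotProduct_sumElim, dotProduct_add, dotProduct_add,
    Sum.elim_comp_inl, Sum.elim_comp_inr]

theorem sumElim_dotProduct_fromBlocks_transpose_zero_mulVec_sumElim [CommSemiring R]
    (Q : Matrix ι ι R) (N : Matrix ι κ R) (x : ι → R) (u : κ → R) :
    Sum.elim x u ⬝ᵥ fromBlocks Q N Nᵀ 0 *ᵥ Sum.elim x u = x ⬝ᵥ Q *ᵥ x + 2 * (x ⬝ᵥ N *ᵥ u) := by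
  rw [sumElim_dotProduct_fromBlocks_mulVec_sumElim, dotProduct_transpose_mulVec, zero_mulVec,
    dotProduct_zero, add_zero, add_assoc, two_mul]

theorem sumElim_dotProduct_fromBlocks_mul_mulVec_sumElim [CommSemiring R]
    (F : Matrix ι ι R) (G : Matrix κ ι R) (A : Matrix ι ι R) (B : Matrix ι κ R)
    (x : ι → R) (u : κ → R) :
    Sum.elim x u ⬝ᵥ fromBlocks (F * A) (F * B) (G * A) (G * B) *ᵥ Sum.elim x u =
      x ⬝ᵥ F *ᵥ (A *ᵥ x + B *ᵥ u) + u ⬝ᵥ G *ᵥ (A *ᵥ x + B *ᵥ u) := by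
  simp only [sumElim_dotProduct_fromBlocks_mulVec_sumElim, mulVec_add, dotProduct_add,
    ← mulVec_mulVec]

end Matrix

theorem ct_odp_lmi_characterization_general
    {n m : ℕ}
    (Abar : Matrix (Fin n) (Fin n) ℝ) (Bbar : Matrix (Fin n) (Fin m) ℝ)
    (C : Matrix (Fin m) (Fin n) ℝ) (Sg : Matrix (Fin m) (Fin m) ℝ)
    (P : Matrix (Fin n) (Fin n) ℝ)
    (hP : P.PosDef) :
    (∀ (x : Fin n → ℝ) (u : Fin m → ℝ),
        x ⬝ᵥ (Abarᵀ * P + P * Abar) *ᵥ x + 2 * (x ⬝ᵥ (P * Bbar) *ᵥ u) ≤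
          u ⬝ᵥ C *ᵥ (Abar *ᵥ x + Bbar *ᵥ u)
            - x ⬝ᵥ (Cᵀ * Sg * C) *ᵥ (Abar *ᵥ x + Bbar *ᵥ u)) ↔
      (∀ z : Fin n ⊕ Fin m → ℝ,
        z ⬝ᵥ (fromBlocks (Abarᵀ * P + P * Abar) (P * Bbar) (Bbarᵀ * P) 0
            - (1 / 2 : ℝ) •
              (fromBlocks (-(Cᵀ * Sg * C * Abar)) (-(Cᵀ * Sg * C * Bbar)) (C * Abar) (C * Bbar)
                + (fromBlocks (-(Cᵀ * Sg * C * Abar)) (-(Cᵀ * Sg * C * Bbar))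
                    (C * Abar) (C * Bbar))ᵀ)) *ᵥ z ≤ 0) := by
  have hPB : Bbarᵀ * P = (P * Bbar)ᵀ := by
    rw [transpose_mul, ← conjTranspose_eq_transpose_of_trivial P, hP.isHermitian.eq]
  have hform : ∀ (x : Fin n → ℝ) (u : Fin m → ℝ),
      Sum.elim x u ⬝ᵥ (fromBlocks (Abarᵀ * P + P * Abar) (P * Bbar) (Bbarᵀ * P) 0
          - (1 / 2 : ℝ) •
            (fromBlocks (-(Cᵀ * Sg * C * Abar)) (-(Cᵀ * Sg * C * Bbar)) (C * Abar) (C * Bbar)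
              + (fromBlocks (-(Cᵀ * Sg * C * Abar)) (-(Cᵀ * Sg * C * Bbar))
                  (C * Abar) (C * Bbar))ᵀ)) *ᵥ Sum.elim x u =
        x ⬝ᵥ (Abarᵀ * P + P * Abar) *ᵥ x + 2 * (x ⬝ᵥ (P * Bbar) *ᵥ u) -
          (u ⬝ᵥ C *ᵥ (Abar *ᵥ x + Bbar *ᵥ u)
            - x ⬝ᵥ (Cᵀ * Sg * C) *ᵥ (Abar *ᵥ x + Bbar *ᵥ u)) := by
    intro x u
    rw [sub_mulVec, dotProduct_sub, dotProduct_half_smul_add_transpose_mulVec, hPB,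
      sumElim_dotProduct_fromBlocks_transpose_zero_mulVec_sumElim,
      ← Matrix.neg_mul (Cᵀ * Sg * C) Abar, ← Matrix.neg_mul (Cᵀ * Sg * C) Bbar,
      sumElim_dotProduct_fromBlocks_mul_mulVec_sumElim, neg_mulVec, dotProduct_neg]
    ring
  refine ⟨fun h z => ?_, fun h x u => ?_⟩
  · rw [← Sum.elim_comp_inl_inr z, hform]
    exact sub_nonpos.mpr (h _ _)
  · simpa only [hform, sub_nonpos] using h (Sum.elim x u)

/-- Continuous-time LMI characterization of ODP(Σ) with quadratic storage `S(x) = xᵀ P x`: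
the dissipation inequality holds for all `x, u` iff `M̄₁ - (1/2)(M̄₂ + M̄₂ᵀ) ⪯ 0`. -/
theorem ct_odp_lmi_characterization
    {n m : ℕ} (hn : 0 < n) (hm : 0 < m)
    (Abar : Matrix (Fin n) (Fin n) ℝ) (Bbar : Matrix (Fin n) (Fin m) ℝ)
    (C : Matrix (Fin m) (Fin n) ℝ) (Sg : Matrix (Fin m) (Fin m) ℝ)
    (P : Matrix (Fin n) (Fin n) ℝ)
    (hSg : Sgᵀ = Sg) (hP : P.PosDef) :
    (∀ (x : Fin n → ℝ) (u : Fin m → ℝ),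
        x ⬝ᵥ (Abarᵀ * P + P * Abar) *ᵥ x + 2 * (x ⬝ᵥ (P * Bbar) *ᵥ u) ≤
          u ⬝ᵥ C *ᵥ (Abar *ᵥ x + Bbar *ᵥ u)
            - x ⬝ᵥ (Cᵀ * Sg * C) *ᵥ (Abar *ᵥ x + Bbar *ᵥ u)) ↔
      (∀ z : Fin n ⊕ Fin m → ℝ,
        z ⬝ᵥ (fromBlocks (Abarᵀ * P + P * Abar) (P * Bbar) (Bbarᵀ * P) 0
            - (1 / 2 : ℝ) •
              (fromBlocks (-(Cᵀ * Sg * C * Abar)) (-(Cᵀ * Sg * C * Bbar)) (C * Abar) (C * Bbar)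
                + (fromBlocks (-(Cᵀ * Sg * C * Abar)) (-(Cᵀ * Sg * C * Bbar))
                    (C * Abar) (C * Bbar))ᵀ)) *ᵥ z ≤ 0) :=
  ct_odp_lmi_characterization_general Abar Bbar C Sg P hP
end

section
/- Suppose X₊ = AX + BU and that the data-driven LMI X₊^T P X₊ − X^T P X − (1/2)(M₃ + M₃^T) ⪯ 0 holds, where M₃ := (U − Σ C X)^T (C X₊ − C X). Then D^T (M₁ − (1/2)(M₂ + M₂^T)) D ⪯ 0, where D := [X; U] ∈ ℝ^{(n+m)×N} is the matrix obtained by stacking X on top of U. -/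
/-!
Both sides are quadratic forms in `z`, and the left one is the congruence `Dᵀ (·) D` of the
block matrix. With `X₊ = AX + BU` we have `[A B] D = X₊` and `[I 0] D = X`, so
`Dᵀ M₁ D = X₊ᵀ P X₊ − Xᵀ P X` and, using `Σᵀ = Σ`, `Dᵀ M₂ D = (U − Σ C X)ᵀ (C X₊ − C X)`.
Congruence commutes with transposition, so the two matrices agree and the data-driven LMI
is literally the claim.
-/

open Matrix

section Congruence

variable {R ι κ ν : Type*} [CommRing R] [Fintype ι]

theorem fromRows_transpose_mul_fromBlocks_mul_fromRows [Fintype κ]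
    (X : Matrix ι ν R) (U : Matrix κ ν R) (E : Matrix ι ι R) (F : Matrix ι κ R)
    (G : Matrix κ ι R) (H : Matrix κ κ R) :
    (fromRows X U)ᵀ * fromBlocks E F G H * fromRows X U
      = Xᵀ * E * X + Xᵀ * F * U + (Uᵀ * G * X + Uᵀ * H * U) := by
  rw [transpose_fromRows, Matrix.mul_assoc, fromBlocks_mul_fromRows, fromCols_mul_fromRows]
  simp only [Matrix.mul_add, Matrix.mul_assoc]

theorem transpose_mul_sub_smul_add_transpose_mul (D : Matrix ι ν R) (M₁ M₂ : Matrix ι ι R)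
    (c : R) :
    Dᵀ * (M₁ - c • (M₂ + M₂ᵀ)) * D = Dᵀ * M₁ * D - c • (Dᵀ * M₂ * D + (Dᵀ * M₂ * D)ᵀ) := by
  simp only [Matrix.mul_sub, Matrix.sub_mul, Matrix.mul_smul, Matrix.smul_mul, Matrix.mul_add,
    Matrix.add_mul, transpose_mul, transpose_transpose, Matrix.mul_assoc]

theorem fromRows_transpose_mul_lyapunovBlocks_mul_fromRows [Fintype κ]
    {A P : Matrix ι ι R} {B : Matrix ι κ R} {X Xp : Matrix ι ν R} {U : Matrix κ ν R}
    (hdata : Xp = A * X + B * U) :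
    (fromRows X U)ᵀ * fromBlocks (Aᵀ * P * A - P) (Aᵀ * P * B) (Bᵀ * P * A) (Bᵀ * P * B) *
        fromRows X U = Xpᵀ * P * Xp - Xᵀ * P * X := by
  rw [fromRows_transpose_mul_fromBlocks_mul_fromRows, hdata]
  simp only [transpose_add, transpose_mul, Matrix.add_mul, Matrix.mul_add, Matrix.sub_mul,
    Matrix.mul_sub, Matrix.mul_assoc]
  abel

theorem fromRows_transpose_mul_supplyBlocks_mul_fromRows [Fintype κ] [DecidableEq ι]
    {A : Matrix ι ι R} {B : Matrix ι κ R} {C : Matrix κ ι R} {Sg : Matrix κ κ R}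
    {X Xp : Matrix ι ν R} {U : Matrix κ ν R} (hSg : Sgᵀ = Sg) (hdata : Xp = A * X + B * U) :
    (fromRows X U)ᵀ * fromBlocks (-(Cᵀ * Sg * (C * (A - 1)))) (-(Cᵀ * Sg * (C * B)))
        (C * (A - 1)) (C * B) * fromRows X U
      = (U - Sg * C * X)ᵀ * (C * Xp - C * X) := by
  rw [fromRows_transpose_mul_fromBlocks_mul_fromRows, hdata]
  simp only [transpose_sub, transpose_mul, hSg, Matrix.mul_add, Matrix.sub_mul,
    Matrix.mul_sub, Matrix.mul_assoc, Matrix.mul_one, Matrix.neg_mul, Matrix.mul_neg]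
  abel

end Congruence

theorem data_lmi_implies_compressed_lmi_general
    {n m N : ℕ}
    (A : Matrix (Fin n) (Fin n) ℝ) (B : Matrix (Fin n) (Fin m) ℝ)
    (C : Matrix (Fin m) (Fin n) ℝ) (Sg : Matrix (Fin m) (Fin m) ℝ)
    (P : Matrix (Fin n) (Fin n) ℝ) (hSg : Sgᵀ = Sg)
    (X Xp : Matrix (Fin n) (Fin N) ℝ) (U : Matrix (Fin m) (Fin N) ℝ)
    (hdata : Xp = A * X + B * U)
    (hLMI : ∀ z : Fin N → ℝ,
      z ⬝ᵥ (Xpᵀ * P * Xp - Xᵀ * P * X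
        - (1 / 2 : ℝ) • ((U - Sg * C * X)ᵀ * (C * Xp - C * X)
            + ((U - Sg * C * X)ᵀ * (C * Xp - C * X))ᵀ)) *ᵥ z ≤ 0) :
    ∀ z : Fin N → ℝ,
      z ⬝ᵥ ((fromRows X U)ᵀ *
        (fromBlocks (Aᵀ * P * A - P) (Aᵀ * P * B) (Bᵀ * P * A) (Bᵀ * P * B)
          - (1 / 2 : ℝ) •
            (fromBlocks (-(Cᵀ * Sg * (C * (A - 1)))) (-(Cᵀ * Sg * (C * B)))
                (C * (A - 1)) (C * B)
              + (fromBlocks (-(Cᵀ * Sg * (C * (A - 1)))) (-(Cᵀ * Sg * (C * B)))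
                  (C * (A - 1)) (C * B))ᵀ)) *
        fromRows X U) *ᵥ z ≤ 0 := by
  rw [transpose_mul_sub_smul_add_transpose_mul, fromRows_transpose_mul_lyapunovBlocks_mul_fromRows hdata,
    fromRows_transpose_mul_supplyBlocks_mul_fromRows hSg hdata]
  exact hLMI

/-- If `X₊ = AX + BU` and the data-driven LMI
`X₊ᵀ P X₊ − Xᵀ P X − (1/2)(M₃ + M₃ᵀ) ⪯ 0` holds, then
`Dᵀ (M₁ − (1/2)(M₂ + M₂ᵀ)) D ⪯ 0` where `D = [X; U]`. -/
theorem data_lmi_implies_compressed_lmi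
    {n m N : ℕ} (hn : 0 < n) (hm : 0 < m) (hN : 0 < N)
    (A : Matrix (Fin n) (Fin n) ℝ) (B : Matrix (Fin n) (Fin m) ℝ)
    (C : Matrix (Fin m) (Fin n) ℝ) (Sg : Matrix (Fin m) (Fin m) ℝ)
    (P : Matrix (Fin n) (Fin n) ℝ) (hSg : Sgᵀ = Sg) (hP : Pᵀ = P)
    (X Xp : Matrix (Fin n) (Fin N) ℝ) (U : Matrix (Fin m) (Fin N) ℝ)
    (hdata : Xp = A * X + B * U)
    (hLMI : ∀ z : Fin N → ℝ,
      z ⬝ᵥ (Xpᵀ * P * Xp - Xᵀ * P * X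
        - (1 / 2 : ℝ) • ((U - Sg * C * X)ᵀ * (C * Xp - C * X)
            + ((U - Sg * C * X)ᵀ * (C * Xp - C * X))ᵀ)) *ᵥ z ≤ 0) :
    ∀ z : Fin N → ℝ,
      z ⬝ᵥ ((fromRows X U)ᵀ *
        (fromBlocks (Aᵀ * P * A - P) (Aᵀ * P * B) (Bᵀ * P * A) (Bᵀ * P * B)
          - (1 / 2 : ℝ) •
            (fromBlocks (-(Cᵀ * Sg * (C * (A - 1)))) (-(Cᵀ * Sg * (C * B)))
                (C * (A - 1)) (C * B)
              + (fromBlocks (-(Cᵀ * Sg * (C * (A - 1)))) (-(Cᵀ * Sg * (C * B)))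
                  (C * (A - 1)) (C * B))ᵀ)) *
        fromRows X U) *ᵥ z ≤ 0 :=
  data_lmi_implies_compressed_lmi_general A B C Sg P hSg X Xp U hdata hLMI
end

section
/- Suppose the measured data satisfies X₊ = AX + BU, the rank condition rank([X; U]) = n + m holds, and P is symmetric positive definite with X₊^T P X₊ − X^T P X − (1/2)(M₃ + M₃^T) ⪯ 0, where M₃ := (U − Σ C X)^T (C X₊ − C X). Then the discrete-time dissipation inequality (Ax + Bu)^T P (Ax + Bu) − x^T P x ≤ u^T (C(A − I)x + CBu) − (Cx)^T Σ (C(A − I)x + CBu) holds for all x ∈ ℝ^n and u ∈ ℝ^m; that is, the system x_{k+1} = Ax_k + Bu_k, y_k = Cx_k is ODP(Σ) with storage function S(x) = x^T P x. -/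
/-!
Stacking the data, `z ↦ (X z, U z)` is onto `ℝⁿ × ℝᵐ` by the rank condition, so every pair
`(x, u)` is realised as `(X z, U z)` for some `z`, and then `X₊ z = A x + B u` by the data
equation. Evaluating the quadratic form of the data LMI at such a `z` gives exactly the storage
increment minus the supply rate at `(x, u)`; the LMI says this is nonpositive.
-/

open Matrix

variable {ι κ ν R : Type*} [Fintype ι] [Fintype κ] [Fintype ν]

theorem Matrix.mulVec_surjective_of_rank_eq_card [Field R] (M : Matrix ι κ R)
    (h : M.rank = Fintype.card ι) : Function.Surjective M.mulVec := by
  have hrange : LinearMap.range M.mulVecLin = ⊤ :=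
    Submodule.eq_top_of_finrank_eq (by rw [← Matrix.rank, h, Module.finrank_fintype_fun_eq_card])
  exact LinearMap.range_eq_top.mp hrange

theorem Matrix.exists_mulVec_eq_of_rank_fromRows [Field R] (X : Matrix ι κ R)
    (U : Matrix ν κ R) (h : (fromRows X U).rank = Fintype.card ι + Fintype.card ν)
    (x : ι → R) (u : ν → R) : ∃ z, X *ᵥ z = x ∧ U *ᵥ z = u := by
  obtain ⟨z, hz⟩ := (fromRows X U).mulVec_surjective_of_rank_eq_card
    (by rw [h, Fintype.card_sum]) (Sum.elim x u)
  rw [fromRows_mulVec] at hz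
  exact ⟨z, funext fun i => congrFun hz (Sum.inl i), funext fun i => congrFun hz (Sum.inr i)⟩

theorem Matrix.dotProduct_transpose_mul_mulVec [CommSemiring R] (E : Matrix ι κ R)
    (G : Matrix ι κ R) (z : κ → R) : z ⬝ᵥ (Eᵀ * G) *ᵥ z = (E *ᵥ z) ⬝ᵥ G *ᵥ z := by
  rw [← mulVec_mulVec, dotProduct_mulVec, vecMul_transpose]

theorem Matrix.dotProduct_transpose_mul_mul_mulVec [CommSemiring R] (E : Matrix ι κ R)
    (F : Matrix ι ν R) (G : Matrix ν κ R) (z : κ → R) :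
    z ⬝ᵥ (Eᵀ * F * G) *ᵥ z = (E *ᵥ z) ⬝ᵥ F *ᵥ (G *ᵥ z) := by
  rw [Matrix.mul_assoc, dotProduct_transpose_mul_mulVec, mulVec_mulVec]

theorem Matrix.dotProduct_half_add_transpose_mulVec [Field R] [CharZero R] (M : Matrix κ κ R)
    (z : κ → R) : z ⬝ᵥ ((1 / 2 : R) • (M + Mᵀ)) *ᵥ z = z ⬝ᵥ M *ᵥ z := by
  have hT : z ⬝ᵥ Mᵀ *ᵥ z = z ⬝ᵥ M *ᵥ z := by
    rw [mulVec_transpose, dotProduct_comm, dotProduct_mulVec]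
  rw [smul_mulVec, add_mulVec, dotProduct_smul, dotProduct_add, hT, smul_eq_mul]
  ring

section DataLMI

variable {n m N : Type*} [Fintype n] [DecidableEq n] [Fintype m] [Fintype N]
  (A : Matrix n n ℝ) (B : Matrix n m ℝ) (C : Matrix m n ℝ) (Sg : Matrix m m ℝ)
  (P : Matrix n n ℝ) (X Xp : Matrix n N ℝ) (U : Matrix m N ℝ)

noncomputable def dataLMI : Matrix N N ℝ :=
  Xpᵀ * P * Xp - Xᵀ * P * X
    - (1 / 2 : ℝ) • ((U - Sg * C * X)ᵀ * (C * Xp - C * X)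
        + ((U - Sg * C * X)ᵀ * (C * Xp - C * X))ᵀ)

theorem dotProduct_dataLMI_mulVec (hSg : Sgᵀ = Sg) (hdata : Xp = A * X + B * U) (z : N → ℝ) :
    z ⬝ᵥ dataLMI C Sg P X Xp U *ᵥ z =
      (A *ᵥ (X *ᵥ z) + B *ᵥ (U *ᵥ z)) ⬝ᵥ P *ᵥ (A *ᵥ (X *ᵥ z) + B *ᵥ (U *ᵥ z))
        - (X *ᵥ z) ⬝ᵥ P *ᵥ (X *ᵥ z)
        - ((U *ᵥ z) ⬝ᵥ ((C * (A - 1)) *ᵥ (X *ᵥ z) + (C * B) *ᵥ (U *ᵥ z))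
          - (C *ᵥ (X *ᵥ z)) ⬝ᵥ Sg *ᵥ ((C * (A - 1)) *ᵥ (X *ᵥ z) + (C * B) *ᵥ (U *ᵥ z))) := by
  have hXp : Xp *ᵥ z = A *ᵥ (X *ᵥ z) + B *ᵥ (U *ᵥ z) := by
    rw [hdata, add_mulVec, mulVec_mulVec, mulVec_mulVec]
  have hdiff : (C * Xp - C * X) *ᵥ z = (C * (A - 1)) *ᵥ (X *ᵥ z) + (C * B) *ᵥ (U *ᵥ z) := by
    simp only [sub_mulVec, ← mulVec_mulVec, hXp, one_mulVec, mulVec_sub, mulVec_add]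
    abel
  -- `Σ` symmetric moves it across the dot product: `(Σ C x) ⬝ v = (C x) ⬝ Σ v`.
  have hSgx : (Sg * C * X) *ᵥ z = Sgᵀ *ᵥ (C *ᵥ (X *ᵥ z)) := by
    rw [hSg, mulVec_mulVec, mulVec_mulVec]
  rw [dataLMI, sub_mulVec, dotProduct_sub, dotProduct_half_add_transpose_mulVec, sub_mulVec,
    dotProduct_sub, dotProduct_transpose_mul_mul_mulVec, dotProduct_transpose_mul_mul_mulVec,
    dotProduct_transpose_mul_mulVec, hXp, hdiff, sub_mulVec, hSgx, sub_dotProduct,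
    mulVec_transpose, ← dotProduct_mulVec]

end DataLMI

theorem data_driven_odp_certification_general
    {n m N : ℕ}
    (A : Matrix (Fin n) (Fin n) ℝ) (B : Matrix (Fin n) (Fin m) ℝ)
    (C : Matrix (Fin m) (Fin n) ℝ) (Sg : Matrix (Fin m) (Fin m) ℝ)
    (P : Matrix (Fin n) (Fin n) ℝ)
    (hSg : Sgᵀ = Sg)
    (X Xp : Matrix (Fin n) (Fin N) ℝ) (U : Matrix (Fin m) (Fin N) ℝ)
    (hdata : Xp = A * X + B * U)
    (hrank : (fromRows X U).rank = n + m)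
    (hLMI : ∀ z : Fin N → ℝ,
      z ⬝ᵥ (Xpᵀ * P * Xp - Xᵀ * P * X
        - (1 / 2 : ℝ) • ((U - Sg * C * X)ᵀ * (C * Xp - C * X)
            + ((U - Sg * C * X)ᵀ * (C * Xp - C * X))ᵀ)) *ᵥ z ≤ 0) :
    ∀ (x : Fin n → ℝ) (u : Fin m → ℝ),
      (A *ᵥ x + B *ᵥ u) ⬝ᵥ P *ᵥ (A *ᵥ x + B *ᵥ u) - x ⬝ᵥ P *ᵥ x ≤
        u ⬝ᵥ ((C * (A - 1)) *ᵥ x + (C * B) *ᵥ u)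
          - (C *ᵥ x) ⬝ᵥ Sg *ᵥ ((C * (A - 1)) *ᵥ x + (C * B) *ᵥ u) := by
  intro x u
  obtain ⟨z, rfl, rfl⟩ :=
    exists_mulVec_eq_of_rank_fromRows X U (by simpa only [Fintype.card_fin] using hrank) x u
  have h := hLMI z
  rw [← dataLMI, dotProduct_dataLMI_mulVec A B C Sg P X Xp U hSg hdata] at h
  linarith

/-- Data-driven ODP certification: if `X₊ = AX + BU`, the rank condition
`rank [X; U] = n + m` holds, `P ≻ 0`, and the data-driven LMI
`X₊ᵀ P X₊ − Xᵀ P X − (1/2)(M₃ + M₃ᵀ) ⪯ 0` holds, then the discrete-time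
dissipation inequality holds for all `x, u`; i.e. the system is ODP(Σ)
with storage `S(x) = xᵀ P x`. -/
theorem data_driven_odp_certification
    {n m N : ℕ} (hn : 0 < n) (hm : 0 < m) (hN : 0 < N)
    (A : Matrix (Fin n) (Fin n) ℝ) (B : Matrix (Fin n) (Fin m) ℝ)
    (C : Matrix (Fin m) (Fin n) ℝ) (Sg : Matrix (Fin m) (Fin m) ℝ)
    (P : Matrix (Fin n) (Fin n) ℝ)
    (hSg : Sgᵀ = Sg) (hP : P.PosDef)
    (X Xp : Matrix (Fin n) (Fin N) ℝ) (U : Matrix (Fin m) (Fin N) ℝ)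
    (hdata : Xp = A * X + B * U)
    (hrank : (fromRows X U).rank = n + m)
    (hLMI : ∀ z : Fin N → ℝ,
      z ⬝ᵥ (Xpᵀ * P * Xp - Xᵀ * P * X
        - (1 / 2 : ℝ) • ((U - Sg * C * X)ᵀ * (C * Xp - C * X)
            + ((U - Sg * C * X)ᵀ * (C * Xp - C * X))ᵀ)) *ᵥ z ≤ 0) :
    ∀ (x : Fin n → ℝ) (u : Fin m → ℝ),
      (A *ᵥ x + B *ᵥ u) ⬝ᵥ P *ᵥ (A *ᵥ x + B *ᵥ u) - x ⬝ᵥ P *ᵥ x ≤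
        u ⬝ᵥ ((C * (A - 1)) *ᵥ x + (C * B) *ᵥ u)
          - (C *ᵥ x) ⬝ᵥ Sg *ᵥ ((C * (A - 1)) *ᵥ x + (C * B) *ᵥ u) :=
  data_driven_odp_certification_general A B C Sg P hSg X Xp U hdata hrank hLMI
end

section
/- Define A(h) := exp(h Ā) and B(h) := ∫₀^h exp(Ā(h − τ)) B̄ dτ, with M₁(h) := [[A(h)^T P A(h) − P, A(h)^T P B(h)],[B(h)^T P A(h), B(h)^T P B(h)]] and M₂(h) := [[−C^T Σ C(A(h) − I), −C^T Σ C B(h)],[C(A(h) − I), C B(h)]]. Then (1/h)(M₁(h) − (1/2)(M₂(h) + M₂(h)^T)) converges to M̄₁ − (1/2)(M̄₂ + M̄₂^T) as h → 0⁺. Consequently, if there exists h₀ > 0 such that M₁(h) − (1/2)(M₂(h) + M₂(h)^T) is negative semidefinite for all h ∈ (0, h₀], then M̄₁ − (1/2)(M̄₂ + M̄₂^T) is negative semidefinite. -/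
open Matrix Filter
open scoped Matrix.Norms.L2Operator Topology

/-- `A(h) = exp(h Ā)`. -/
noncomputable def Ad {n : ℕ} (Abar : Matrix (Fin n) (Fin n) ℝ) (h : ℝ) :
    Matrix (Fin n) (Fin n) ℝ :=
  NormedSpace.exp (h • Abar)

/-- `B(h) = ∫₀^h exp(Ā(h−τ)) B̄ dτ`. -/
noncomputable def Bd {n m : ℕ} (Abar : Matrix (Fin n) (Fin n) ℝ)
    (Bbar : Matrix (Fin n) (Fin m) ℝ) (h : ℝ) : Matrix (Fin n) (Fin m) ℝ :=
  ∫ τ in (0 : ℝ)..h, NormedSpace.exp ((h - τ) • Abar) * Bbar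

/-- The sampled block matrix `M₁(h)`. -/
noncomputable def M1d {n m : ℕ} (Abar : Matrix (Fin n) (Fin n) ℝ)
    (Bbar : Matrix (Fin n) (Fin m) ℝ) (P : Matrix (Fin n) (Fin n) ℝ) (h : ℝ) :
    Matrix (Fin n ⊕ Fin m) (Fin n ⊕ Fin m) ℝ :=
  fromBlocks ((Ad Abar h)ᵀ * P * Ad Abar h - P) ((Ad Abar h)ᵀ * P * Bd Abar Bbar h)
    ((Bd Abar Bbar h)ᵀ * P * Ad Abar h) ((Bd Abar Bbar h)ᵀ * P * Bd Abar Bbar h)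

/-- The sampled block matrix `M₂(h)`. -/
noncomputable def M2d {n m : ℕ} (Abar : Matrix (Fin n) (Fin n) ℝ)
    (Bbar : Matrix (Fin n) (Fin m) ℝ) (C : Matrix (Fin m) (Fin n) ℝ)
    (Sg : Matrix (Fin m) (Fin m) ℝ) (h : ℝ) :
    Matrix (Fin n ⊕ Fin m) (Fin n ⊕ Fin m) ℝ :=
  fromBlocks (-(Cᵀ * Sg * (C * (Ad Abar h - 1)))) (-(Cᵀ * Sg * (C * Bd Abar Bbar h)))
    (C * (Ad Abar h - 1)) (C * Bd Abar Bbar h)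

/-! Since `A(0) = I`, `B(0) = 0`, `A'(0) = Ā` and `B'(0) = B̄`, every block of `M₁(h)` and
`M₂(h)` is `h` times a matrix expression in `A(h)`, `B(h)` and the difference quotients
`(A(h) - I)/h`, `B(h)/h`, which converges to the corresponding block of `M̄₁`, `M̄₂`.
Negative semidefiniteness passes to the limit because it is a closed condition, invariant
under multiplication by `1/h > 0`. -/

section MatrixLimits

variable {α R : Type*} [TopologicalSpace R] {l : Filter α} {ι κ μ ν : Type*}

theorem Filter.Tendsto.matrix_mul [Ring R] [IsTopologicalRing R] [Fintype κ]
    {f : α → Matrix ι κ R} {g : α → Matrix κ μ R} {A : Matrix ι κ R} {B : Matrix κ μ R}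
    (hf : Tendsto f l (𝓝 A)) (hg : Tendsto g l (𝓝 B)) :
    Tendsto (fun x => f x * g x) l (𝓝 (A * B)) :=
  ((continuous_fst.matrix_mul continuous_snd).tendsto (A, B)).comp (hf.prodMk_nhds hg)

theorem Filter.Tendsto.matrix_transpose {f : α → Matrix ι κ R} {A : Matrix ι κ R}
    (hf : Tendsto f l (𝓝 A)) : Tendsto (fun x => (f x)ᵀ) l (𝓝 Aᵀ) :=
  (continuous_id.matrix_transpose.tendsto A).comp hf

theorem Filter.Tendsto.matrix_fromBlocks {f₁₁ : α → Matrix ι μ R} {f₁₂ : α → Matrix ι ν R}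
    {f₂₁ : α → Matrix κ μ R} {f₂₂ : α → Matrix κ ν R} {A₁₁ : Matrix ι μ R}
    {A₁₂ : Matrix ι ν R} {A₂₁ : Matrix κ μ R} {A₂₂ : Matrix κ ν R}
    (h₁₁ : Tendsto f₁₁ l (𝓝 A₁₁)) (h₁₂ : Tendsto f₁₂ l (𝓝 A₁₂))
    (h₂₁ : Tendsto f₂₁ l (𝓝 A₂₁)) (h₂₂ : Tendsto f₂₂ l (𝓝 A₂₂)) :
    Tendsto (fun x => fromBlocks (f₁₁ x) (f₁₂ x) (f₂₁ x) (f₂₂ x)) l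
      (𝓝 (fromBlocks A₁₁ A₁₂ A₂₁ A₂₂)) := by
  have hc : Continuous fun p : (Matrix ι μ R × Matrix ι ν R) × (Matrix κ μ R × Matrix κ ν R) =>
      fromBlocks p.1.1 p.1.2 p.2.1 p.2.2 := by fun_prop
  exact (hc.tendsto ((A₁₁, A₁₂), (A₂₁, A₂₂))).comp
    ((h₁₁.prodMk_nhds h₁₂).prodMk_nhds (h₂₁.prodMk_nhds h₂₂))

end MatrixLimits

section Sampling

variable {n m : ℕ} (Abar : Matrix (Fin n) (Fin n) ℝ) (Bbar : Matrix (Fin n) (Fin m) ℝ)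

theorem Ad_zero : Ad Abar 0 = 1 := by
  simp [Ad]

theorem Bd_zero : Bd Abar Bbar 0 = 0 := by
  simp [Bd]

theorem hasDerivAt_Ad (h : ℝ) : HasDerivAt (Ad Abar) (Ad Abar h * Abar) h :=
  hasDerivAt_exp_smul_const Abar h

theorem continuous_Ad : Continuous (Ad Abar) :=
  continuous_iff_continuousAt.2 fun h => (hasDerivAt_Ad Abar h).continuousAt

theorem Bd_eq_integral (h : ℝ) : Bd Abar Bbar h = ∫ s in (0 : ℝ)..h, Ad Abar s * Bbar := by
  simpa [Ad, Bd] using intervalIntegral.integral_comp_sub_left (fun s => Ad Abar s * Bbar)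
    (a := 0) (b := h) h

theorem hasDerivAt_Bd (h : ℝ) : HasDerivAt (Bd Abar Bbar) (Ad Abar h * Bbar) h := by
  have hcont : Continuous fun s => Ad Abar s * Bbar :=
    (continuous_Ad Abar).matrix_mul continuous_const
  rw [show Bd Abar Bbar = _ from funext (Bd_eq_integral Abar Bbar)]
  exact intervalIntegral.integral_hasDerivAt_right (hcont.intervalIntegrable _ _)
    (hcont.stronglyMeasurableAtFilter _ _) hcont.continuousAt

theorem tendsto_Ad_zero : Tendsto (Ad Abar) (𝓝[≠] 0) (𝓝 1) := by
  simpa only [Ad_zero] using (hasDerivAt_Ad Abar 0).continuousAt.tendsto.mono_left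
    nhdsWithin_le_nhds

theorem tendsto_Bd_zero : Tendsto (Bd Abar Bbar) (𝓝[≠] 0) (𝓝 0) := by
  simpa only [Bd_zero] using (hasDerivAt_Bd Abar Bbar 0).continuousAt.tendsto.mono_left
    nhdsWithin_le_nhds

theorem tendsto_inv_smul_Ad_sub_one :
    Tendsto (fun h => h⁻¹ • (Ad Abar h - 1)) (𝓝[≠] 0) (𝓝 Abar) := by
  simpa [Ad_zero] using (hasDerivAt_Ad Abar 0).tendsto_slope_zero

theorem tendsto_inv_smul_Bd : Tendsto (fun h => h⁻¹ • Bd Abar Bbar h) (𝓝[≠] 0) (𝓝 Bbar) := by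
  simpa [Bd_zero, Ad_zero] using (hasDerivAt_Bd Abar Bbar 0).tendsto_slope_zero

variable (P : Matrix (Fin n) (Fin n) ℝ) (C : Matrix (Fin m) (Fin n) ℝ)
  (Sg : Matrix (Fin m) (Fin m) ℝ)

theorem smul_M1d (c h : ℝ) :
    c • M1d Abar Bbar P h =
      fromBlocks ((c • (Ad Abar h - 1))ᵀ * P + (Ad Abar h)ᵀ * P * (c • (Ad Abar h - 1)))
        ((Ad Abar h)ᵀ * P * (c • Bd Abar Bbar h)) ((c • Bd Abar Bbar h)ᵀ * P * Ad Abar h)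
        ((c • Bd Abar Bbar h)ᵀ * P * Bd Abar Bbar h) := by
  have hquad : (Ad Abar h - 1)ᵀ * P + (Ad Abar h)ᵀ * P * (Ad Abar h - 1) =
      (Ad Abar h)ᵀ * P * Ad Abar h - P := by
    simp only [transpose_sub, transpose_one, Matrix.sub_mul, Matrix.mul_sub, Matrix.one_mul,
      Matrix.mul_one]
    abel
  simp only [M1d, fromBlocks_smul, transpose_smul, Matrix.smul_mul, Matrix.mul_smul, ← smul_add,
    hquad]

theorem smul_M2d (c h : ℝ) :
    c • M2d Abar Bbar C Sg h =
      fromBlocks (-(Cᵀ * Sg * C * (c • (Ad Abar h - 1)))) (-(Cᵀ * Sg * C * (c • Bd Abar Bbar h)))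
        (C * (c • (Ad Abar h - 1))) (C * (c • Bd Abar Bbar h)) := by
  simp only [M2d, fromBlocks_smul, Matrix.mul_smul, smul_neg, Matrix.mul_assoc]

theorem tendsto_inv_smul_M1d :
    Tendsto (fun h => h⁻¹ • M1d Abar Bbar P h) (𝓝[≠] 0)
      (𝓝 (fromBlocks (Abarᵀ * P + P * Abar) (P * Bbar) (Bbarᵀ * P) 0)) := by
  have hA := tendsto_Ad_zero Abar
  have hB := tendsto_Bd_zero Abar Bbar
  have hE := tendsto_inv_smul_Ad_sub_one Abar
  have hF := tendsto_inv_smul_Bd Abar Bbar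
  have hP : Tendsto (fun _ : ℝ => P) (𝓝[≠] 0) (𝓝 P) := tendsto_const_nhds
  have := Tendsto.matrix_fromBlocks
    ((hE.matrix_transpose.matrix_mul hP).add ((hA.matrix_transpose.matrix_mul hP).matrix_mul hE))
    ((hA.matrix_transpose.matrix_mul hP).matrix_mul hF)
    ((hF.matrix_transpose.matrix_mul hP).matrix_mul hA)
    ((hF.matrix_transpose.matrix_mul hP).matrix_mul hB)
  simpa only [smul_M1d, transpose_one, Matrix.one_mul, Matrix.mul_one, Matrix.mul_zero] using this

theorem tendsto_inv_smul_M2d :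
    Tendsto (fun h => h⁻¹ • M2d Abar Bbar C Sg h) (𝓝[≠] 0)
      (𝓝 (fromBlocks (-(Cᵀ * Sg * C * Abar)) (-(Cᵀ * Sg * C * Bbar)) (C * Abar) (C * Bbar))) := by
  have hE := tendsto_inv_smul_Ad_sub_one Abar
  have hF := tendsto_inv_smul_Bd Abar Bbar
  have hK : Tendsto (fun _ : ℝ => Cᵀ * Sg * C) (𝓝[≠] 0) (𝓝 (Cᵀ * Sg * C)) := tendsto_const_nhds
  have hC : Tendsto (fun _ : ℝ => C) (𝓝[≠] 0) (𝓝 C) := tendsto_const_nhds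
  simpa only [smul_M2d] using Tendsto.matrix_fromBlocks (hK.matrix_mul hE).neg
    (hK.matrix_mul hF).neg (hC.matrix_mul hE) (hC.matrix_mul hF)

end Sampling

theorem quadForm_nonpos_of_tendsto_one_div_smul {ι : Type*} [Fintype ι]
    {f : ℝ → Matrix ι ι ℝ} {L : Matrix ι ι ℝ}
    (hf : Tendsto (fun h => (1 / h) • f h) (𝓝[>] 0) (𝓝 L))
    (hneg : ∃ h₀ > (0 : ℝ), ∀ h ∈ Set.Ioc 0 h₀, ∀ z, z ⬝ᵥ f h *ᵥ z ≤ 0) (z : ι → ℝ) :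
    z ⬝ᵥ L *ᵥ z ≤ 0 := by
  obtain ⟨h₀, hh₀, hneg⟩ := hneg
  have hquad : Continuous fun M : Matrix ι ι ℝ => z ⬝ᵥ M *ᵥ z := by fun_prop
  refine le_of_tendsto ((hquad.tendsto L).comp hf) ?_
  filter_upwards [Ioc_mem_nhdsGT hh₀] with h hh
  simp only [Function.comp_apply, smul_mulVec, dotProduct_smul, smul_eq_mul]
  exact mul_nonpos_of_nonneg_of_nonpos (one_div_nonneg.2 hh.1.le) (hneg h hh z)

theorem sampled_lmi_limit_and_necessity_general
    {n m : ℕ}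
    (Abar : Matrix (Fin n) (Fin n) ℝ) (Bbar : Matrix (Fin n) (Fin m) ℝ)
    (C : Matrix (Fin m) (Fin n) ℝ) (Sg : Matrix (Fin m) (Fin m) ℝ)
    (P : Matrix (Fin n) (Fin n) ℝ) :
    Tendsto
      (fun h : ℝ => (1 / h) •
        (M1d Abar Bbar P h
          - (1 / 2 : ℝ) • (M2d Abar Bbar C Sg h + (M2d Abar Bbar C Sg h)ᵀ)))
      (𝓝[>] (0 : ℝ))
      (𝓝 (fromBlocks (Abarᵀ * P + P * Abar) (P * Bbar) (Bbarᵀ * P) 0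
        - (1 / 2 : ℝ) •
          (fromBlocks (-(Cᵀ * Sg * C * Abar)) (-(Cᵀ * Sg * C * Bbar)) (C * Abar) (C * Bbar)
            + (fromBlocks (-(Cᵀ * Sg * C * Abar)) (-(Cᵀ * Sg * C * Bbar))
                (C * Abar) (C * Bbar))ᵀ))) ∧
    ((∃ h₀ > (0 : ℝ), ∀ h ∈ Set.Ioc (0 : ℝ) h₀, ∀ z : Fin n ⊕ Fin m → ℝ,
        z ⬝ᵥ (M1d Abar Bbar P h
          - (1 / 2 : ℝ) • (M2d Abar Bbar C Sg h + (M2d Abar Bbar C Sg h)ᵀ)) *ᵥ z ≤ 0) →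
      ∀ z : Fin n ⊕ Fin m → ℝ,
        z ⬝ᵥ (fromBlocks (Abarᵀ * P + P * Abar) (P * Bbar) (Bbarᵀ * P) 0
          - (1 / 2 : ℝ) •
            (fromBlocks (-(Cᵀ * Sg * C * Abar)) (-(Cᵀ * Sg * C * Bbar)) (C * Abar) (C * Bbar)
              + (fromBlocks (-(Cᵀ * Sg * C * Abar)) (-(Cᵀ * Sg * C * Bbar))
                  (C * Abar) (C * Bbar))ᵀ)) *ᵥ z ≤ 0) := by
  refine ⟨?limit, quadForm_nonpos_of_tendsto_one_div_smul ?limit⟩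
  have hM2 := tendsto_inv_smul_M2d Abar Bbar C Sg
  have hlim := (tendsto_inv_smul_M1d Abar Bbar P).sub
    ((hM2.add hM2.matrix_transpose).const_smul (1 / 2 : ℝ))
  refine (hlim.mono_left (nhdsGT_le_nhdsNE 0)).congr fun h => ?_
  simp only [one_div, smul_sub, smul_add, transpose_smul, smul_comm h⁻¹ (2⁻¹ : ℝ)]

/-- `(1/h)(M₁(h) − (1/2)(M₂(h) + M₂(h)ᵀ))` converges to `M̄₁ − (1/2)(M̄₂ + M̄₂ᵀ)`
as `h → 0⁺`; consequently, if the discrete-time matrix is negative semidefinite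
for all small `h > 0`, then the continuous-time matrix is negative semidefinite. -/
theorem sampled_lmi_limit_and_necessity
    {n m : ℕ} (hn : 0 < n) (hm : 0 < m)
    (Abar : Matrix (Fin n) (Fin n) ℝ) (Bbar : Matrix (Fin n) (Fin m) ℝ)
    (C : Matrix (Fin m) (Fin n) ℝ) (Sg : Matrix (Fin m) (Fin m) ℝ)
    (P : Matrix (Fin n) (Fin n) ℝ) (hSg : Sgᵀ = Sg) (hP : Pᵀ = P) :
    Tendsto
      (fun h : ℝ => (1 / h) •
        (M1d Abar Bbar P h
          - (1 / 2 : ℝ) • (M2d Abar Bbar C Sg h + (M2d Abar Bbar C Sg h)ᵀ)))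
      (𝓝[>] (0 : ℝ))
      (𝓝 (fromBlocks (Abarᵀ * P + P * Abar) (P * Bbar) (Bbarᵀ * P) 0
        - (1 / 2 : ℝ) •
          (fromBlocks (-(Cᵀ * Sg * C * Abar)) (-(Cᵀ * Sg * C * Bbar)) (C * Abar) (C * Bbar)
            + (fromBlocks (-(Cᵀ * Sg * C * Abar)) (-(Cᵀ * Sg * C * Bbar))
                (C * Abar) (C * Bbar))ᵀ))) ∧
    ((∃ h₀ > (0 : ℝ), ∀ h ∈ Set.Ioc (0 : ℝ) h₀, ∀ z : Fin n ⊕ Fin m → ℝ,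
        z ⬝ᵥ (M1d Abar Bbar P h
          - (1 / 2 : ℝ) • (M2d Abar Bbar C Sg h + (M2d Abar Bbar C Sg h)ᵀ)) *ᵥ z ≤ 0) →
      ∀ z : Fin n ⊕ Fin m → ℝ,
        z ⬝ᵥ (fromBlocks (Abarᵀ * P + P * Abar) (P * Bbar) (Bbarᵀ * P) 0
          - (1 / 2 : ℝ) •
            (fromBlocks (-(Cᵀ * Sg * C * Abar)) (-(Cᵀ * Sg * C * Bbar)) (C * Abar) (C * Bbar)
              + (fromBlocks (-(Cᵀ * Sg * C * Abar)) (-(Cᵀ * Sg * C * Bbar))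
                  (C * Abar) (C * Bbar))ᵀ)) *ᵥ z ≤ 0) :=
  sampled_lmi_limit_and_necessity_general Abar Bbar C Sg P
end
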